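/- Let a ∈ ℝ^m, b ∈ ℝ, and w > 0. Consider minimizing ‖u‖² + w·δ² over all (u, δ) ∈ ℝ^m × ℝ with aᵀu + b ≤ δ and δ ≥ 0. Then the unique minimizer is u* := −(max(b, 0)/(‖a‖² + 1/w))·a and δ* := max(b, 0)/(w·‖a‖² + 1); that is, (u*, δ*) is feasible and every feasible (u, δ) ≠ (u*, δ*) has strictly larger objective value. -/
import Mathlib


open RealInnerProductSpace

lemma clf_aux {w A C b ip nu δ t : ℝ} (hw : 0 < w) (hA : 0 ≤ A)
    (ht0 : 0 ≤ t) (ht : t * (w * A + 1) = C) (hCb : C * (b - C) = 0)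
    (hip : ip + b ≤ δ)
    (h1 : 0 ≤ nu - 2 * (-(w * t) * ip) + (w * t) ^ 2 * A)
    (hstrict : 0 < nu - 2 * (-(w * t) * ip) + (w * t) ^ 2 * A ∨ 0 < (δ - t) ^ 2) :
    (w * t) ^ 2 * A + w * t ^ 2 < nu + w * δ ^ 2 := by
  have hD : (0:ℝ) < w * A + 1 := by positivity
  have htbc : t * (b - C) = 0 := by
    have h : (t * (b - C)) * (w * A + 1) = 0 * (w * A + 1) := by
      rw [zero_mul]
      calc (t * (b - C)) * (w * A + 1) = (t * (w * A + 1)) * (b - C) := by ring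
        _ = C * (b - C) := by rw [ht]
        _ = 0 := hCb
    exact mul_right_cancel₀ hD.ne' h
  have P1 : 0 ≤ w * t * (δ - b - ip) :=
    mul_nonneg (mul_nonneg hw.le ht0) (by linarith)
  have P4 : w * t * C = w ^ 2 * t ^ 2 * A + w * t ^ 2 := by
    rw [← ht]; ring
  have Ptbc : w * (t * (b - C)) = 0 := by rw [htbc, mul_zero]
  have P2 : 0 < nu - 2 * (-(w * t) * ip) + (w * t) ^ 2 * A + w * (δ - t) ^ 2 := by
    rcases hstrict with h | h
    · nlinarith [mul_nonneg hw.le (sq_nonneg (δ - t))]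
    · nlinarith [mul_pos hw h]
  nlinarith [P1, P2, P4, Ptbc]

/-- CLF-only branch of the closed-form relaxed control law: the unique
minimizer of `‖u‖² + w·δ²` subject to `⟪a, u⟫ + b ≤ δ` and `δ ≥ 0` is
`u* = -(max b 0 / (‖a‖² + 1/w)) • a`, `δ* = max b 0 / (w·‖a‖² + 1)`. -/
theorem clf_only_closed_form {m : ℕ} (a : EuclideanSpace ℝ (Fin m)) (b w : ℝ)
    (hw : 0 < w) :
    (⟪a, -(max b 0 / (‖a‖ ^ 2 + 1 / w)) • a⟫ + b ≤ max b 0 / (w * ‖a‖ ^ 2 + 1) ∧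
        0 ≤ max b 0 / (w * ‖a‖ ^ 2 + 1)) ∧
      (∀ (u : EuclideanSpace ℝ (Fin m)) (δ : ℝ),
        ⟪a, u⟫ + b ≤ δ → 0 ≤ δ →
        (u, δ) ≠ (-(max b 0 / (‖a‖ ^ 2 + 1 / w)) • a, max b 0 / (w * ‖a‖ ^ 2 + 1)) →
        ‖-(max b 0 / (‖a‖ ^ 2 + 1 / w)) • a‖ ^ 2
            + w * (max b 0 / (w * ‖a‖ ^ 2 + 1)) ^ 2
          < ‖u‖ ^ 2 + w * δ ^ 2) := by
  have hA : (0:ℝ) ≤ ‖a‖ ^ 2 := sq_nonneg _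
  have hD : (0:ℝ) < w * ‖a‖ ^ 2 + 1 := by positivity
  have hE : (0:ℝ) < ‖a‖ ^ 2 + 1 / w := by positivity
  have hC0 : (0:ℝ) ≤ max b 0 := le_max_right _ _
  have hbC : b ≤ max b 0 := le_max_left _ _
  have hCb : max b 0 * (b - max b 0) = 0 := by
    rcases le_total b 0 with h | h
    · simp [max_eq_right h]
    · simp [max_eq_left h]
  have hs : max b 0 / (‖a‖ ^ 2 + 1 / w) = w * (max b 0 / (w * ‖a‖ ^ 2 + 1)) := by
    field_simp
  set t : ℝ := max b 0 / (w * ‖a‖ ^ 2 + 1) with htdef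
  have ht0 : (0:ℝ) ≤ t := div_nonneg hC0 hD.le
  have ht : t * (w * ‖a‖ ^ 2 + 1) = max b 0 := div_mul_cancel₀ _ hD.ne'
  have hipstar : ⟪a, -(max b 0 / (‖a‖ ^ 2 + 1 / w)) • a⟫ = -(w * t) * ‖a‖ ^ 2 := by
    rw [hs, real_inner_smul_right, real_inner_self_eq_norm_sq]
  have hnormstar : ‖-(max b 0 / (‖a‖ ^ 2 + 1 / w)) • a‖ ^ 2
      = (w * t) ^ 2 * ‖a‖ ^ 2 := by
    rw [hs, norm_smul, Real.norm_eq_abs, mul_pow, sq_abs, neg_sq]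
  refine ⟨⟨?_, ht0⟩, ?_⟩
  · rw [hipstar]
    nlinarith [ht]
  · intro u δ hip hδ hne
    rw [hnormstar]
    have hexp : ‖u - -(max b 0 / (‖a‖ ^ 2 + 1 / w)) • a‖ ^ 2
        = ‖u‖ ^ 2 - 2 * (-(w * t) * ⟪a, u⟫) + (w * t) ^ 2 * ‖a‖ ^ 2 := by
      rw [norm_sub_sq_real, hnormstar, hs, real_inner_smul_right,
        real_inner_comm]
    have h1 : 0 ≤ ‖u‖ ^ 2 - 2 * (-(w * t) * ⟪a, u⟫) + (w * t) ^ 2 * ‖a‖ ^ 2 := by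
      rw [← hexp]; positivity
    rw [ne_eq, Prod.mk.injEq, not_and_or] at hne
    have hstrict : 0 < ‖u‖ ^ 2 - 2 * (-(w * t) * ⟪a, u⟫) + (w * t) ^ 2 * ‖a‖ ^ 2
        ∨ 0 < (δ - t) ^ 2 := by
      rcases hne with h | h
      · left
        rw [← hexp]
        have h0 : u - -(max b 0 / (‖a‖ ^ 2 + 1 / w)) • a ≠ 0 := sub_ne_zero.mpr h
        exact pow_pos (norm_pos_iff.mpr h0) 2
      · right
        have h0 : δ - t ≠ 0 := sub_ne_zero.mpr h
        exact pow_pos (abs_pos.mpr h0) 2 |>.trans_le (by rw [sq_abs])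
    exact clf_aux hw hA ht0 ht hCb hip h1 hstrict
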